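/- arXiv:1905.10917 — 3 statements merged into one kernel-verified Lean document; each statement's English description precedes it below -/
import Mathlib

section
/- The series defining P^λ converges, and for every v ∈ ℝ^d one has ‖P^λ v‖_μ ≤ ((1−λ)/(1−γλ)) ‖v‖_μ. -/
open scoped BigOperators

/-- The μ-weighted inner product on ℝ^d. -/
noncomputable def muInner {d : ℕ} (μ a b : Fin d → ℝ) : ℝ := ∑ i, μ i * a i * b i

/-- The μ-weighted norm on ℝ^d. -/
noncomputable def muNorm {d : ℕ} (μ a : Fin d → ℝ) : ℝ := Real.sqrt (muInner μ a a)

/-- The rescaling map a ↦ (√μ_i a_i) as a linear map into Euclidean space. -/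
noncomputable def muT {d : ℕ} (μ : Fin d → ℝ) :
    (Fin d → ℝ) →ₗ[ℝ] EuclideanSpace ℝ (Fin d) where
  toFun a := WithLp.toLp 2 (fun i => Real.sqrt (μ i) * a i)
  map_add' a b := by
    ext i
    simp [mul_add]
  map_smul' c a := by
    ext i
    simp [mul_comm, mul_left_comm]
    ring

noncomputable def muTL {d : ℕ} (μ : Fin d → ℝ) :
    (Fin d → ℝ) →L[ℝ] EuclideanSpace ℝ (Fin d) :=
  LinearMap.toContinuousLinearMap (muT μ)

lemma muNorm_eq_norm {d : ℕ} (μ : Fin d → ℝ) (hμ : ∀ i, 0 ≤ μ i) (a : Fin d → ℝ) :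
    muNorm μ a = ‖muTL μ a‖ := by
  rw [EuclideanSpace.norm_eq]
  unfold muNorm muInner
  congr 1
  apply Finset.sum_congr rfl
  intro i _
  have : (muTL μ a) i = Real.sqrt (μ i) * a i := rfl
  rw [this, Real.norm_eq_abs, sq_abs, mul_pow, Real.sq_sqrt (hμ i)]
  ring

/-- Stochastic matrices: powers are stochastic and preserve invariance. -/
lemma stoch_pow {d : ℕ} (P : Matrix (Fin d) (Fin d) ℝ)
    (hP_nonneg : ∀ i j, 0 ≤ P i j) (hP_row : ∀ i, ∑ j, P i j = 1)
    (μ : Fin d → ℝ) (hμ_inv : ∀ j, ∑ i, μ i * P i j = μ j) :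
    ∀ m : ℕ, (∀ i j, 0 ≤ (P ^ (m + 1)) i j) ∧ (∀ i, ∑ j, (P ^ (m + 1)) i j = 1) ∧
      (∀ j, ∑ i, μ i * (P ^ (m + 1)) i j = μ j) := by
  intro m
  induction m with
  | zero => simpa [pow_one] using ⟨hP_nonneg, hP_row, hμ_inv⟩
  | succ n ih =>
    obtain ⟨h0, h1, h2⟩ := ih
    have hmul : P ^ (n + 1 + 1) = (P ^ (n + 1)) * P := by
      rw [pow_succ]
    refine ⟨?_, ?_, ?_⟩
    · intro i j
      rw [hmul]
      simp only [Matrix.mul_apply]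
      exact Finset.sum_nonneg fun k _ => mul_nonneg (h0 i k) (hP_nonneg k j)
    · intro i
      rw [hmul]
      simp only [Matrix.mul_apply]
      rw [Finset.sum_comm]
      calc ∑ k, ∑ j, (P ^ (n + 1)) i k * P k j
          = ∑ k, (P ^ (n + 1)) i k * ∑ j, P k j := by
            simp [Finset.mul_sum]
        _ = 1 := by simp [hP_row, h1]
    · intro j
      rw [hmul]
      simp only [Matrix.mul_apply, Finset.mul_sum]
      rw [Finset.sum_comm]
      calc ∑ k, ∑ i, μ i * ((P ^ (n + 1)) i k * P k j)
          = ∑ k, (∑ i, μ i * (P ^ (n + 1)) i k) * P k j := by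
            simp [Finset.sum_mul, mul_assoc]
        _ = ∑ k, μ k * P k j := by simp [h2]
        _ = μ j := hμ_inv j

/-- Contraction: a stochastic matrix with invariant μ is a contraction in μ-norm. -/
lemma muInner_contraction {d : ℕ} (Q : Matrix (Fin d) (Fin d) ℝ)
    (hQ0 : ∀ i j, 0 ≤ Q i j) (hQ1 : ∀ i, ∑ j, Q i j = 1)
    (μ : Fin d → ℝ) (hμ0 : ∀ i, 0 ≤ μ i) (hμ_inv : ∀ j, ∑ i, μ i * Q i j = μ j)
    (v : Fin d → ℝ) :
    muInner μ (Q.mulVec v) (Q.mulVec v) ≤ muInner μ v v := by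
  unfold muInner
  have key : ∀ i, (Q.mulVec v i) ^ 2 ≤ ∑ j, Q i j * (v j) ^ 2 := by
    intro i
    have hcs := Finset.sum_mul_sq_le_sq_mul_sq Finset.univ
      (fun j => Real.sqrt (Q i j)) (fun j => Real.sqrt (Q i j) * v j)
    have h1 : ∀ j, Real.sqrt (Q i j) * (Real.sqrt (Q i j) * v j) = Q i j * v j := by
      intro j
      rw [← mul_assoc, Real.mul_self_sqrt (hQ0 i j)]
    have h2 : ∀ j, (Real.sqrt (Q i j)) ^ 2 = Q i j := fun j => Real.sq_sqrt (hQ0 i j)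
    have h3 : ∀ j, (Real.sqrt (Q i j) * v j) ^ 2 = Q i j * (v j) ^ 2 := by
      intro j; rw [mul_pow, h2]
    simp only [h1, h2, h3] at hcs
    have : Q.mulVec v i = ∑ j, Q i j * v j := by
      simp [Matrix.mulVec, dotProduct]
    rw [this]
    calc (∑ j, Q i j * v j) ^ 2 ≤ (∑ j, Q i j) * ∑ j, Q i j * (v j) ^ 2 := hcs
      _ = ∑ j, Q i j * (v j) ^ 2 := by rw [hQ1 i, one_mul]
  calc ∑ i, μ i * Q.mulVec v i * Q.mulVec v i
      = ∑ i, μ i * (Q.mulVec v i) ^ 2 := by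
        apply Finset.sum_congr rfl; intro i _; ring
    _ ≤ ∑ i, μ i * ∑ j, Q i j * (v j) ^ 2 := by
        apply Finset.sum_le_sum
        intro i _
        exact mul_le_mul_of_nonneg_left (key i) (hμ0 i)
    _ = ∑ j, (∑ i, μ i * Q i j) * (v j) ^ 2 := by
        simp only [Finset.mul_sum, Finset.sum_mul]
        rw [Finset.sum_comm]
        apply Finset.sum_congr rfl; intro i _
        apply Finset.sum_congr rfl; intro j _; ring
    _ = ∑ j, μ j * (v j) ^ 2 := by simp [hμ_inv]
    _ = ∑ i, μ i * v i * v i := by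
        apply Finset.sum_congr rfl; intro i _; ring

lemma muNorm_contraction {d : ℕ} (Q : Matrix (Fin d) (Fin d) ℝ)
    (hQ0 : ∀ i j, 0 ≤ Q i j) (hQ1 : ∀ i, ∑ j, Q i j = 1)
    (μ : Fin d → ℝ) (hμ0 : ∀ i, 0 ≤ μ i) (hμ_inv : ∀ j, ∑ i, μ i * Q i j = μ j)
    (v : Fin d → ℝ) :
    muNorm μ (Q.mulVec v) ≤ muNorm μ v :=
  Real.sqrt_le_sqrt (muInner_contraction Q hQ0 hQ1 μ hμ0 hμ_inv v)

/-- The series defining P^λ := (1−λ) Σ_{m=0}^∞ (λγ)^m P^{m+1} converges, and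
‖P^λ v‖_μ ≤ ((1−λ)/(1−γλ)) ‖v‖_μ for every v ∈ ℝ^d. -/
theorem Plambda_summable_and_contraction
    {d : ℕ} (hd : 0 < d)
    (P : Matrix (Fin d) (Fin d) ℝ)
    (hP_nonneg : ∀ i j, 0 ≤ P i j)
    (hP_row : ∀ i, ∑ j, P i j = 1)
    (μ : Fin d → ℝ)
    (hμ_pos : ∀ i, 0 < μ i)
    (hμ_sum : ∑ i, μ i = 1)
    (hμ_inv : ∀ j, ∑ i, μ i * P i j = μ j)
    (γ lam : ℝ) (hγ0 : 0 < γ) (hγ1 : γ < 1) (hlam0 : 0 ≤ lam) (hlam1 : lam < 1)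
    (v : Fin d → ℝ) :
    Summable (fun m : ℕ => (lam * γ) ^ m • P ^ (m + 1)) ∧
    muNorm μ
      (((1 - lam) • ∑' m : ℕ, (lam * γ) ^ m • P ^ (m + 1)).mulVec v)
      ≤ ((1 - lam) / (1 - γ * lam)) * muNorm μ v := by
  have hμ0 : ∀ i, 0 ≤ μ i := fun i => (hμ_pos i).le
  set c : ℝ := lam * γ with hc
  have hc0 : 0 ≤ c := mul_nonneg hlam0 hγ0.le
  have hc1 : c < 1 := by
    calc c = lam * γ := rfl
      _ ≤ lam * 1 := by nlinarith
      _ < 1 := by nlinarith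
  have hgeo : Summable (fun m : ℕ => c ^ m) := summable_geometric_of_lt_one hc0 hc1
  have hstoch := stoch_pow P hP_nonneg hP_row μ hμ_inv
  -- entries of P^(m+1) are in [0,1]
  have hentry_le : ∀ m i j, (P ^ (m + 1)) i j ≤ 1 := by
    intro m i j
    obtain ⟨h0, h1, _⟩ := hstoch m
    calc (P ^ (m + 1)) i j ≤ ∑ k, (P ^ (m + 1)) i k :=
          Finset.single_le_sum (fun k _ => h0 i k) (Finset.mem_univ j)
      _ = 1 := h1 i
  -- summability of matrices
  have hA : Summable (fun m : ℕ => c ^ m • P ^ (m + 1)) := by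
    refine Pi.summable.mpr ?_
    intro i
    rw [Pi.summable]
    intro j
    have : ∀ m : ℕ, (c ^ m • P ^ (m + 1)) i j = c ^ m * (P ^ (m + 1)) i j := by
      intro m; rfl
    simp only [this]
    apply Summable.of_nonneg_of_le
      (fun m => mul_nonneg (pow_nonneg hc0 m) ((hstoch m).1 i j))
      (fun m => by
        calc c ^ m * (P ^ (m + 1)) i j ≤ c ^ m * 1 :=
              mul_le_mul_of_nonneg_left (hentry_le m i j) (pow_nonneg hc0 m)
          _ = c ^ m := mul_one _)
      hgeo
  refine ⟨hA, ?_⟩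
  -- summability of vectors
  set w : ℕ → (Fin d → ℝ) := fun m => c ^ m • ((P ^ (m + 1)).mulVec v) with hw_def
  set B : ℝ := ∑ j, |v j| with hB
  have hvbound : ∀ m i, |((P ^ (m + 1)).mulVec v) i| ≤ B := by
    intro m i
    obtain ⟨h0, h1, _⟩ := hstoch m
    calc |((P ^ (m + 1)).mulVec v) i| = |∑ j, (P ^ (m + 1)) i j * v j| := by
          simp [Matrix.mulVec, dotProduct]
      _ ≤ ∑ j, |(P ^ (m + 1)) i j * v j| := Finset.abs_sum_le_sum_abs _ _
      _ ≤ ∑ j, |v j| := by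
          apply Finset.sum_le_sum
          intro j _
          rw [abs_mul, abs_of_nonneg (h0 i j)]
          calc (P ^ (m + 1)) i j * |v j| ≤ 1 * |v j| :=
                mul_le_mul_of_nonneg_right (hentry_le m i j) (abs_nonneg _)
            _ = |v j| := one_mul _
  have hw : Summable w := by
    rw [Pi.summable]
    intro i
    apply Summable.of_abs
    apply Summable.of_nonneg_of_le (fun m => abs_nonneg _)
      (fun m => by
        have : |w m i| = c ^ m * |((P ^ (m + 1)).mulVec v) i| := by
          simp [hw_def, abs_mul, abs_of_nonneg (pow_nonneg hc0 m)]
        rw [this]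
        exact mul_le_mul_of_nonneg_left (hvbound m i) (pow_nonneg hc0 m))
      (hgeo.mul_right B)
  -- the key identity: (∑' A).mulVec v = ∑' w
  have hkey : (∑' m : ℕ, c ^ m • P ^ (m + 1)).mulVec v = ∑' m, w m := by
    funext i
    have hAi : Summable (fun m => (c ^ m • P ^ (m + 1)) i) := (Pi.summable.mp hA) i
    have hAij : ∀ j, Summable (fun m => (c ^ m • P ^ (m + 1)) i j) :=
      fun j => (Pi.summable.mp hAi) j
    calc (∑' m : ℕ, c ^ m • P ^ (m + 1)).mulVec v i
        = ∑ j, (∑' m : ℕ, c ^ m • P ^ (m + 1)) i j * v j := by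
          simp [Matrix.mulVec, dotProduct]
      _ = ∑ j, (∑' m : ℕ, (c ^ m • P ^ (m + 1)) i j) * v j := by
          apply Finset.sum_congr rfl; intro j _
          have e : (∑' m : ℕ, c ^ m • P ^ (m + 1)) i = ∑' m : ℕ, (c ^ m • P ^ (m + 1)) i :=
            tsum_apply hA
          rw [congrFun e j, tsum_apply hAi]
      _ = ∑ j, ∑' m : ℕ, (c ^ m • P ^ (m + 1)) i j * v j := by
          apply Finset.sum_congr rfl; intro j _
          rw [tsum_mul_right]
      _ = ∑' m : ℕ, ∑ j, (c ^ m • P ^ (m + 1)) i j * v j := by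
          rw [← Summable.tsum_finsetSum (fun j _ => (hAij j).mul_right (v j))]
      _ = ∑' m : ℕ, w m i := by
          apply tsum_congr; intro m
          have : w m i = ∑ j, c ^ m * ((P ^ (m + 1)) i j * v j) := by
            simp [hw_def, Matrix.mulVec, dotProduct, Finset.mul_sum]
          rw [this]
          apply Finset.sum_congr rfl; intro j _
          show (c ^ m * (P ^ (m + 1)) i j) * v j = _
          ring
      _ = (∑' m, w m) i := (tsum_apply hw).symm
  -- norm bound for each term
  have hterm : ∀ m, ‖muTL μ (w m)‖ ≤ c ^ m * muNorm μ v := by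
    intro m
    obtain ⟨h0, h1, h2⟩ := hstoch m
    have : muTL μ (w m) = c ^ m • muTL μ ((P ^ (m + 1)).mulVec v) := by
      rw [hw_def]; exact (muTL μ).map_smul _ _
    rw [this, norm_smul, Real.norm_eq_abs, abs_of_nonneg (pow_nonneg hc0 m)]
    apply mul_le_mul_of_nonneg_left _ (pow_nonneg hc0 m)
    rw [← muNorm_eq_norm μ hμ0]
    exact muNorm_contraction _ h0 h1 μ hμ0 h2 v
  have htermsum : Summable (fun m => ‖muTL μ (w m)‖) := by
    apply Summable.of_nonneg_of_le (fun m => norm_nonneg _) hterm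
    exact hgeo.mul_right _
  -- bound the norm of the total sum
  have hbound : muNorm μ ((∑' m : ℕ, c ^ m • P ^ (m + 1)).mulVec v)
      ≤ (1 - c)⁻¹ * muNorm μ v := by
    rw [hkey, muNorm_eq_norm μ hμ0, ContinuousLinearMap.map_tsum (muTL μ) hw]
    calc ‖∑' m, muTL μ (w m)‖ ≤ ∑' m, ‖muTL μ (w m)‖ := norm_tsum_le_tsum_norm htermsum
      _ ≤ ∑' m, c ^ m * muNorm μ v := Summable.tsum_le_tsum hterm htermsum (hgeo.mul_right _)
      _ = (∑' m : ℕ, c ^ m) * muNorm μ v := tsum_mul_right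
      _ = (1 - c)⁻¹ * muNorm μ v := by rw [tsum_geometric_of_lt_one hc0 hc1]
  -- finish
  have h1lam : 0 ≤ 1 - lam := by linarith
  rw [Matrix.smul_mulVec]
  have hsmul : muNorm μ ((1 - lam) • (∑' m : ℕ, c ^ m • P ^ (m + 1)).mulVec v)
      = (1 - lam) * muNorm μ ((∑' m : ℕ, c ^ m • P ^ (m + 1)).mulVec v) := by
    rw [muNorm_eq_norm μ hμ0, muNorm_eq_norm μ hμ0, (muTL μ).map_smul, norm_smul,
      Real.norm_eq_abs, abs_of_nonneg h1lam]
  rw [hsmul]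
  have : (1 - lam) / (1 - γ * lam) * muNorm μ v
      = (1 - lam) * ((1 - c)⁻¹ * muNorm μ v) := by
    rw [hc, div_eq_mul_inv, mul_comm γ lam, mul_assoc]
  rw [this]
  exact mul_le_mul_of_nonneg_left hbound h1lam
end

section
/- The vector V* := Σ_{t=0}^∞ γ^t P^t r̄ is well defined (the series converges), and for every λ ∈ [0,1) it is the unique fixed point of the TD operator T^λ on ℝ^d. -/
open scoped BigOperators

/-- P^λ := (1−λ) Σ_{m=0}^∞ (λγ)^m P^{m+1}. -/
noncomputable def Plam {d : ℕ} (P : Matrix (Fin d) (Fin d) ℝ) (γ lam : ℝ) :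
    Matrix (Fin d) (Fin d) ℝ :=
  (1 - lam) • ∑' m : ℕ, (lam * γ) ^ m • P ^ (m + 1)

/-- r̄^λ := (1−λ) Σ_{m=0}^∞ λ^m Σ_{t=0}^m γ^t P^t r̄. -/
noncomputable def rlam {d : ℕ} (P : Matrix (Fin d) (Fin d) ℝ) (γ lam : ℝ)
    (rbar : Fin d → ℝ) : Fin d → ℝ :=
  (1 - lam) • ∑' m : ℕ, lam ^ m • (∑ t ∈ Finset.range (m + 1), γ ^ t • (P ^ t).mulVec rbar)

/-- The TD operator T^λ V := r̄^λ + γ P^λ V. -/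
noncomputable def Tlam {d : ℕ} (P : Matrix (Fin d) (Fin d) ℝ) (γ lam : ℝ)
    (rbar : Fin d → ℝ) (V : Fin d → ℝ) : Fin d → ℝ :=
  rlam P γ lam rbar + γ • (Plam P γ lam).mulVec V

/-- V* := Σ_{t=0}^∞ γ^t P^t r̄. -/
noncomputable def Vstar {d : ℕ} (P : Matrix (Fin d) (Fin d) ℝ) (γ : ℝ)
    (rbar : Fin d → ℝ) : Fin d → ℝ :=
  ∑' t : ℕ, γ ^ t • (P ^ t).mulVec rbar

namespace VstarAux

variable {d : ℕ}

lemma pow_entry_nonneg {P : Matrix (Fin d) (Fin d) ℝ} (h : ∀ i j, 0 ≤ P i j) (t : ℕ) :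
    ∀ i j, 0 ≤ (P ^ t) i j := by
  induction t with
  | zero =>
    intro i j
    simp only [pow_zero, Matrix.one_apply]
    split <;> norm_num
  | succ n ih =>
    intro i j
    rw [pow_succ, Matrix.mul_apply]
    exact Finset.sum_nonneg fun k _ => mul_nonneg (ih i k) (h k j)

lemma pow_row_sum {P : Matrix (Fin d) (Fin d) ℝ} (h : ∀ i, ∑ j, P i j = 1) (t : ℕ) :
    ∀ i, ∑ j, (P ^ t) i j = 1 := by
  induction t with
  | zero => intro i; simp [Matrix.one_apply]
  | succ n ih =>
    intro i
    simp only [pow_succ, Matrix.mul_apply]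
    rw [Finset.sum_comm]
    calc ∑ k, ∑ j, (P ^ n) i k * P k j = ∑ k, (P ^ n) i k * ∑ j, P k j := by
          simp [Finset.mul_sum]
      _ = 1 := by simp only [h, mul_one]; exact ih i

lemma pow_entry_le_one {P : Matrix (Fin d) (Fin d) ℝ} (hn : ∀ i j, 0 ≤ P i j)
    (hr : ∀ i, ∑ j, P i j = 1) (t : ℕ) (i j : Fin d) : (P ^ t) i j ≤ 1 := by
  calc (P ^ t) i j ≤ ∑ k, (P ^ t) i k :=
        Finset.single_le_sum (fun k _ => pow_entry_nonneg hn t i k) (Finset.mem_univ j)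
    _ = 1 := pow_row_sum hr t i

lemma stoch_mulVec_norm_le {Q : Matrix (Fin d) (Fin d) ℝ} (hn : ∀ i j, 0 ≤ Q i j)
    (hr : ∀ i, ∑ j, Q i j = 1) (v : Fin d → ℝ) : ‖Q.mulVec v‖ ≤ ‖v‖ := by
  rw [pi_norm_le_iff_of_nonneg (norm_nonneg v)]
  intro i
  have : Q.mulVec v i = ∑ j, Q i j * v j := rfl
  rw [this, Real.norm_eq_abs]
  calc |∑ j, Q i j * v j| ≤ ∑ j, |Q i j * v j| := Finset.abs_sum_le_sum_abs _ _
    _ ≤ ∑ j, Q i j * ‖v‖ := by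
        refine Finset.sum_le_sum fun j _ => ?_
        rw [abs_mul, abs_of_nonneg (hn i j)]
        exact mul_le_mul_of_nonneg_left ((Real.norm_eq_abs (v j)) ▸ norm_le_pi_norm v j) (hn i j)
    _ = ‖v‖ := by rw [← Finset.sum_mul, hr i, one_mul]

lemma pow_mulVec_norm_le {P : Matrix (Fin d) (Fin d) ℝ} (hn : ∀ i j, 0 ≤ P i j)
    (hr : ∀ i, ∑ j, P i j = 1) (t : ℕ) (v : Fin d → ℝ) : ‖(P ^ t).mulVec v‖ ≤ ‖v‖ :=
  stoch_mulVec_norm_le (pow_entry_nonneg hn t) (pow_row_sum hr t) v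

end VstarAux

open VstarAux

/-- V* := Σ_{t=0}^∞ γ^t P^t r̄ is well defined (the series converges) and is the
unique fixed point of the TD operator T^λ on ℝ^d. -/
theorem Vstar_unique_fixed_point
    {d : ℕ} (hd : 0 < d)
    (P : Matrix (Fin d) (Fin d) ℝ)
    (hP_nonneg : ∀ i j, 0 ≤ P i j)
    (hP_row : ∀ i, ∑ j, P i j = 1)
    (μ : Fin d → ℝ)
    (hμ_pos : ∀ i, 0 < μ i)
    (hμ_sum : ∑ i, μ i = 1)
    (hμ_inv : ∀ j, ∑ i, μ i * P i j = μ j)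
    (γ lam : ℝ) (hγ0 : 0 < γ) (hγ1 : γ < 1) (hlam0 : 0 ≤ lam) (hlam1 : lam < 1)
    (rbar : Fin d → ℝ) :
    Summable (fun t : ℕ => γ ^ t • (P ^ t).mulVec rbar) ∧
    Tlam P γ lam rbar (Vstar P γ rbar) = Vstar P γ rbar ∧
    (∀ W : Fin d → ℝ, Tlam P γ lam rbar W = W → W = Vstar P γ rbar) := by
  -- basic facts
  have hlg0 : 0 ≤ lam * γ := mul_nonneg hlam0 hγ0.le
  have hlg1 : lam * γ < 1 := by nlinarith
  -- main summability
  have hsum : Summable (fun t : ℕ => γ ^ t • (P ^ t).mulVec rbar) := by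
    refine Summable.of_norm_bounded (g := fun t => γ ^ t * ‖rbar‖)
      ((summable_geometric_of_lt_one hγ0.le hγ1).mul_right _) fun t => ?_
    rw [norm_smul, Real.norm_eq_abs, abs_of_nonneg (pow_nonneg hγ0.le t)]
    exact mul_le_mul_of_nonneg_left (pow_mulVec_norm_le hP_nonneg hP_row t rbar)
      (pow_nonneg hγ0.le t)
  set S : Fin d → ℝ := Vstar P γ rbar with hS
  -- summability of the matrix series
  have hsumM : Summable (fun m : ℕ => (lam * γ) ^ m • P ^ (m + 1)) := by
    refine Pi.summable.mpr ?_
    intro i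
    rw [Pi.summable]
    intro j
    refine Summable.of_norm_bounded (g := fun m => (lam * γ) ^ m)
      (summable_geometric_of_lt_one hlg0 hlg1) fun m => ?_
    have h1 : ((lam * γ) ^ m • P ^ (m + 1)) i j = (lam * γ) ^ m * (P ^ (m + 1)) i j := rfl
    rw [h1, Real.norm_eq_abs, abs_mul, abs_of_nonneg (pow_nonneg hlg0 m),
      abs_of_nonneg (pow_entry_nonneg hP_nonneg _ i j)]
    calc (lam * γ) ^ m * (P ^ (m + 1)) i j ≤ (lam * γ) ^ m * 1 :=
          mul_le_mul_of_nonneg_left (pow_entry_le_one hP_nonneg hP_row _ i j)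
            (pow_nonneg hlg0 m)
      _ = (lam * γ) ^ m := mul_one _
  -- mulVec distributes over tsum of matrices
  have hmulVec_tsum : ∀ V : Fin d → ℝ,
      (∑' m : ℕ, (lam * γ) ^ m • P ^ (m + 1)).mulVec V
        = ∑' m : ℕ, (lam * γ) ^ m • (P ^ (m + 1)).mulVec V := by
    intro V
    let L : Matrix (Fin d) (Fin d) ℝ →ₗ[ℝ] (Fin d → ℝ) :=
      { toFun := fun A => A.mulVec V
        map_add' := fun A B => Matrix.add_mulVec A B V
        map_smul' := fun c A => Matrix.smul_mulVec c A V }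
    have := (LinearMap.toContinuousLinearMap L).map_tsum hsumM
    simp only [LinearMap.coe_toContinuousLinearMap'] at this
    calc (∑' m : ℕ, (lam * γ) ^ m • P ^ (m + 1)).mulVec V
        = L (∑' m : ℕ, (lam * γ) ^ m • P ^ (m + 1)) := rfl
      _ = ∑' m : ℕ, L ((lam * γ) ^ m • P ^ (m + 1)) := this
      _ = ∑' m : ℕ, (lam * γ) ^ m • (P ^ (m + 1)).mulVec V := by
          refine tsum_congr fun m => ?_
          show ((lam * γ) ^ m • P ^ (m + 1)).mulVec V = _
          exact Matrix.smul_mulVec _ _ _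
  -- the Plam mulVec formula
  have hPlam : ∀ V : Fin d → ℝ, (Plam P γ lam).mulVec V
      = (1 - lam) • ∑' m : ℕ, (lam * γ) ^ m • (P ^ (m + 1)).mulVec V := by
    intro V
    rw [Plam, Matrix.smul_mulVec, hmulVec_tsum]
  -- shift identity
  have hshift : ∀ k : ℕ, γ ^ k • (P ^ k).mulVec S
      = S - ∑ t ∈ Finset.range k, γ ^ t • (P ^ t).mulVec rbar := by
    intro k
    have hmap := (LinearMap.toContinuousLinearMap ((P ^ k).mulVecLin)).map_tsum hsum
    simp only [LinearMap.coe_toContinuousLinearMap', Matrix.mulVecLin_apply] at hmap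
    have h1 : (P ^ k).mulVec S = ∑' t : ℕ, γ ^ t • (P ^ (k + t)).mulVec rbar := by
      rw [hS, Vstar, hmap]
      refine tsum_congr fun t => ?_
      rw [Matrix.mulVec_smul, Matrix.mulVec_mulVec, ← pow_add]
    have hsum' : Summable (fun t : ℕ => γ ^ t • (P ^ (k + t)).mulVec rbar) := by
      refine Summable.of_norm_bounded (g := fun t => γ ^ t * ‖rbar‖)
        ((summable_geometric_of_lt_one hγ0.le hγ1).mul_right _) fun t => ?_
      rw [norm_smul, Real.norm_eq_abs, abs_of_nonneg (pow_nonneg hγ0.le t)]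
      exact mul_le_mul_of_nonneg_left (pow_mulVec_norm_le hP_nonneg hP_row _ rbar)
        (pow_nonneg hγ0.le t)
    have h2 : γ ^ k • (P ^ k).mulVec S = ∑' t : ℕ, γ ^ (t + k) • (P ^ (t + k)).mulVec rbar := by
      rw [h1, ← Summable.tsum_const_smul (γ ^ k) hsum']
      refine tsum_congr fun t => ?_
      rw [smul_smul, ← pow_add, add_comm k t]
    rw [h2, eq_sub_iff_add_eq, add_comm]
    exact Summable.sum_add_tsum_nat_add k hsum
  -- summability of the reward partial-sum series
  have hC : ∀ m : ℕ, ‖∑ t ∈ Finset.range (m + 1), γ ^ t • (P ^ t).mulVec rbar‖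
      ≤ (1 - γ)⁻¹ * ‖rbar‖ := by
    intro m
    calc ‖∑ t ∈ Finset.range (m + 1), γ ^ t • (P ^ t).mulVec rbar‖
        ≤ ∑ t ∈ Finset.range (m + 1), ‖γ ^ t • (P ^ t).mulVec rbar‖ :=
          norm_sum_le _ _
      _ ≤ ∑ t ∈ Finset.range (m + 1), γ ^ t * ‖rbar‖ := by
          refine Finset.sum_le_sum fun t _ => ?_
          rw [norm_smul, Real.norm_eq_abs, abs_of_nonneg (pow_nonneg hγ0.le t)]
          exact mul_le_mul_of_nonneg_left (pow_mulVec_norm_le hP_nonneg hP_row t rbar)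
            (pow_nonneg hγ0.le t)
      _ ≤ (1 - γ)⁻¹ * ‖rbar‖ := by
          rw [← Finset.sum_mul]
          refine mul_le_mul_of_nonneg_right ?_ (norm_nonneg rbar)
          have := (summable_geometric_of_lt_one hγ0.le hγ1).sum_le_tsum (Finset.range (m + 1))
            (fun t _ => pow_nonneg hγ0.le t)
          rwa [tsum_geometric_of_lt_one hγ0.le hγ1] at this
  have hsumR : Summable (fun m : ℕ =>
      lam ^ m • (∑ t ∈ Finset.range (m + 1), γ ^ t • (P ^ t).mulVec rbar)) := by
    refine Summable.of_norm_bounded (g := fun m => lam ^ m * ((1 - γ)⁻¹ * ‖rbar‖))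
      ((summable_geometric_of_lt_one hlam0 hlam1).mul_right _) fun m => ?_
    rw [norm_smul, Real.norm_eq_abs, abs_of_nonneg (pow_nonneg hlam0 m)]
    exact mul_le_mul_of_nonneg_left (hC m) (pow_nonneg hlam0 m)
  have hsumSA : Summable (fun m : ℕ =>
      lam ^ m • (S - ∑ t ∈ Finset.range (m + 1), γ ^ t • (P ^ t).mulVec rbar)) := by
    refine Summable.of_norm_bounded (g := fun m => lam ^ m * (‖S‖ + (1 - γ)⁻¹ * ‖rbar‖))
      ((summable_geometric_of_lt_one hlam0 hlam1).mul_right _) fun m => ?_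
    rw [norm_smul, Real.norm_eq_abs, abs_of_nonneg (pow_nonneg hlam0 m)]
    refine mul_le_mul_of_nonneg_left ?_ (pow_nonneg hlam0 m)
    calc ‖S - _‖ ≤ ‖S‖ + ‖∑ t ∈ Finset.range (m + 1), γ ^ t • (P ^ t).mulVec rbar‖ :=
          norm_sub_le _ _
      _ ≤ ‖S‖ + (1 - γ)⁻¹ * ‖rbar‖ := by linarith [hC m]
  -- fixed point
  have hfix : Tlam P γ lam rbar S = S := by
    have hterm : ∀ m : ℕ, γ • ((lam * γ) ^ m • (P ^ (m + 1)).mulVec S)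
        = lam ^ m • (S - ∑ t ∈ Finset.range (m + 1), γ ^ t • (P ^ t).mulVec rbar) := by
      intro m
      rw [← hshift (m + 1), smul_smul, smul_smul]
      congr 1
      ring
    have hsumPS : Summable (fun m : ℕ => (lam * γ) ^ m • (P ^ (m + 1)).mulVec S) := by
      refine Summable.of_norm_bounded (g := fun m => (lam * γ) ^ m * ‖S‖)
        ((summable_geometric_of_lt_one hlg0 hlg1).mul_right _) fun m => ?_
      rw [norm_smul, Real.norm_eq_abs, abs_of_nonneg (pow_nonneg hlg0 m)]
      exact mul_le_mul_of_nonneg_left (pow_mulVec_norm_le hP_nonneg hP_row _ S)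
        (pow_nonneg hlg0 m)
    have hγsum : γ • (∑' m : ℕ, (lam * γ) ^ m • (P ^ (m + 1)).mulVec S)
        = ∑' m : ℕ, lam ^ m • (S - ∑ t ∈ Finset.range (m + 1), γ ^ t • (P ^ t).mulVec rbar) := by
      rw [← Summable.tsum_const_smul γ hsumPS]
      exact tsum_congr hterm
    rw [Tlam, hPlam S, rlam, smul_comm γ (1 - lam), hγsum, ← smul_add, ← Summable.tsum_add hsumR hsumSA]
    have h3 : ∀ m : ℕ,
        lam ^ m • (∑ t ∈ Finset.range (m + 1), γ ^ t • (P ^ t).mulVec rbar)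
          + lam ^ m • (S - ∑ t ∈ Finset.range (m + 1), γ ^ t • (P ^ t).mulVec rbar)
          = lam ^ m • S := by
      intro m
      rw [← smul_add, add_sub_cancel]
    rw [tsum_congr h3, Summable.tsum_smul_const (summable_geometric_of_lt_one hlam0 hlam1) S,
      tsum_geometric_of_lt_one hlam0 hlam1, smul_smul,
      mul_inv_cancel₀ (by linarith : (1 : ℝ) - lam ≠ 0), one_smul]
  refine ⟨hsum, hfix, fun W hW => ?_⟩
  -- uniqueness via contraction
  set u : Fin d → ℝ := W - S with hu
  have hufix : u = γ • (Plam P γ lam).mulVec u := by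
    have : Tlam P γ lam rbar W - Tlam P γ lam rbar S = γ • (Plam P γ lam).mulVec u := by
      rw [Tlam, Tlam, hu, Matrix.mulVec_sub, smul_sub]
      abel
    rw [hW, hfix] at this
    rw [hu]
    exact this
  have hlg1' : 0 < 1 - lam * γ := sub_pos.mpr hlg1
  have hlamle : (0:ℝ) ≤ 1 - lam := by linarith
  have hbound : ‖u‖ ≤ (1 - lam) * (γ * (1 - lam * γ)⁻¹ * ‖u‖) := by
    conv_lhs => rw [hufix]
    rw [hPlam u, smul_comm γ (1 - lam), norm_smul, Real.norm_eq_abs,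
      abs_of_nonneg hlamle]
    refine mul_le_mul_of_nonneg_left ?_ hlamle
    have hterm : ∀ m : ℕ, ‖γ • ((lam * γ) ^ m • (P ^ (m + 1)).mulVec u)‖
        ≤ γ * ((lam * γ) ^ m * ‖u‖) := by
      intro m
      rw [norm_smul, norm_smul, Real.norm_eq_abs, Real.norm_eq_abs,
        abs_of_nonneg hγ0.le, abs_of_nonneg (pow_nonneg hlg0 m)]
      exact mul_le_mul_of_nonneg_left
        (mul_le_mul_of_nonneg_left (pow_mulVec_norm_le hP_nonneg hP_row _ u)
          (pow_nonneg hlg0 m)) hγ0.le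
    have hgs : HasSum (fun m : ℕ => γ * ((lam * γ) ^ m * ‖u‖)) (γ * ((1 - lam * γ)⁻¹ * ‖u‖)) := by
      exact (((hasSum_geometric_of_lt_one hlg0 hlg1).mul_right ‖u‖).mul_left γ)
    have := tsum_of_norm_bounded hgs hterm
    calc ‖γ • ∑' m : ℕ, (lam * γ) ^ m • (P ^ (m + 1)).mulVec u‖
        = ‖∑' m : ℕ, γ • ((lam * γ) ^ m • (P ^ (m + 1)).mulVec u)‖ := by
          have hsumPu : Summable (fun m : ℕ => (lam * γ) ^ m • (P ^ (m + 1)).mulVec u) := by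
            refine Summable.of_norm_bounded (g := fun m => (lam * γ) ^ m * ‖u‖)
              ((summable_geometric_of_lt_one hlg0 hlg1).mul_right _) fun m => ?_
            rw [norm_smul, Real.norm_eq_abs, abs_of_nonneg (pow_nonneg hlg0 m)]
            exact mul_le_mul_of_nonneg_left (pow_mulVec_norm_le hP_nonneg hP_row _ u)
              (pow_nonneg hlg0 m)
          rw [Summable.tsum_const_smul γ hsumPu]
      _ ≤ γ * ((1 - lam * γ)⁻¹ * ‖u‖) := this
      _ = γ * (1 - lam * γ)⁻¹ * ‖u‖ := by ring
  have hc1 : (1 - lam) * (γ * (1 - lam * γ)⁻¹) < 1 := by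
    have h : ((1 - lam) * γ) / (1 - lam * γ) < 1 := (div_lt_one hlg1').mpr (by nlinarith)
    calc (1 - lam) * (γ * (1 - lam * γ)⁻¹) = ((1 - lam) * γ) / (1 - lam * γ) := by ring
      _ < 1 := h
  have hle0 : ‖u‖ ≤ 0 := by nlinarith [norm_nonneg u, hbound, hc1]
  have hnorm0 : ‖u‖ = 0 := le_antisymm hle0 (norm_nonneg u)
  have : u = 0 := norm_eq_zero.mp hnorm0
  rw [hu] at this
  exact sub_eq_zero.mp this
end

section
/- For every V ∈ ℝ^d one has ⟨V − V*, T^λ V − V⟩_μ ≤ (γ − 1) ‖V − V*‖_μ², where V* := Σ_{t=0}^∞ γ^t P^t r̄ is the fixed point of T^λ; that is, the TD vector field is strongly dissipative toward V* in the μ-weighted inner product. -/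
open scoped BigOperators

variable {d : ℕ}


lemma pow_nonneg_entry (P : Matrix (Fin d) (Fin d) ℝ) (hP : ∀ i j, 0 ≤ P i j) :
    ∀ (t : ℕ) (i j : Fin d), 0 ≤ (P ^ t) i j := by
  intro t
  induction t with
  | zero => intro i j; simp [Matrix.one_apply]; split <;> norm_num
  | succ t ih =>
    intro i j
    rw [pow_succ, Matrix.mul_apply]
    exact Finset.sum_nonneg fun k _ => mul_nonneg (ih i k) (hP k j)

lemma pow_row_sum (P : Matrix (Fin d) (Fin d) ℝ) (hrow : ∀ i, ∑ j, P i j = 1) :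
    ∀ (t : ℕ) (i : Fin d), ∑ j, (P ^ t) i j = 1 := by
  intro t
  induction t with
  | zero => intro i; simp [Matrix.one_apply]
  | succ t ih =>
    intro i
    simp only [pow_succ, Matrix.mul_apply]
    rw [Finset.sum_comm]
    simp_rw [← Finset.mul_sum, hrow, mul_one]
    exact ih i

lemma pow_entry_le_one (P : Matrix (Fin d) (Fin d) ℝ) (hP : ∀ i j, 0 ≤ P i j)
    (hrow : ∀ i, ∑ j, P i j = 1) (t : ℕ) (i j : Fin d) : (P ^ t) i j ≤ 1 := by
  calc (P ^ t) i j ≤ ∑ k, (P ^ t) i k :=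
        Finset.single_le_sum (fun k _ => pow_nonneg_entry P hP t i k) (Finset.mem_univ j)
    _ = 1 := pow_row_sum P hrow t i

lemma pow_mu_inv (P : Matrix (Fin d) (Fin d) ℝ) (μ : Fin d → ℝ)
    (hμ_inv : ∀ j, ∑ i, μ i * P i j = μ j) :
    ∀ (t : ℕ) (j : Fin d), ∑ i, μ i * (P ^ t) i j = μ j := by
  intro t
  induction t with
  | zero => intro j; simp [Matrix.one_apply]
  | succ t ih =>
    intro j
    simp only [pow_succ, Matrix.mul_apply, Finset.mul_sum]
    rw [Finset.sum_comm]
    simp_rw [← mul_assoc, ← Finset.sum_mul]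
    simp_rw [ih]
    exact hμ_inv j


lemma summable_geom_mul (c : ℝ) (hc0 : 0 ≤ c) (hc1 : c < 1) (g : ℕ → ℝ)
    (hg0 : ∀ m, 0 ≤ g m) (hg1 : ∀ m, g m ≤ 1) : Summable (fun m => c ^ m * g m) := by
  apply Summable.of_nonneg_of_le (fun m => mul_nonneg (pow_nonneg hc0 m) (hg0 m))
    (fun m => ?_) (summable_geometric_of_lt_one hc0 hc1)
  calc c ^ m * g m ≤ c ^ m * 1 := by
        exact mul_le_mul_of_nonneg_left (hg1 m) (pow_nonneg hc0 m)
    _ = c ^ m := mul_one _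

-- summability of the matrix series in the Pi space
lemma summable_Pseries (P : Matrix (Fin d) (Fin d) ℝ) (hP : ∀ i j, 0 ≤ P i j)
    (hrow : ∀ i, ∑ j, P i j = 1) (c : ℝ) (hc0 : 0 ≤ c) (hc1 : c < 1) :
    Summable (fun m : ℕ => c ^ m • P ^ (m + 1)) := by
  refine Pi.summable.mpr fun i => Pi.summable.mpr fun j => ?_
  simp only [Matrix.smul_apply, smul_eq_mul]
  exact summable_geom_mul c hc0 hc1 _ (fun m => pow_nonneg_entry P hP _ i j)
    (fun m => pow_entry_le_one P hP hrow _ i j)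

example (P : Matrix (Fin d) (Fin d) ℝ) (i j : Fin d) (c : ℝ) : (c • P) i j = c * P i j := by
  simp [Matrix.smul_apply]

lemma key_ineq (Q : Matrix (Fin d) (Fin d) ℝ) (μ w : Fin d → ℝ)
    (hQ0 : ∀ i j, 0 ≤ Q i j) (c : ℝ) (hc1 : c ≤ 1)
    (hrow : ∀ i, ∑ j, Q i j = c) (hcol : ∀ j, ∑ i, μ i * Q i j = c * μ j)
    (hμ0 : ∀ i, 0 ≤ μ i) :
    ∑ i, μ i * w i * Q.mulVec w i ≤ ∑ i, μ i * w i * w i := by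
  have hS0 : 0 ≤ ∑ i, μ i * w i * w i :=
    Finset.sum_nonneg fun i _ => by nlinarith [hμ0 i, sq_nonneg (w i)]
  have step1 : ∑ i, μ i * w i * Q.mulVec w i
      = ∑ i, ∑ j, μ i * Q i j * (w i * w j) := by
    apply Finset.sum_congr rfl; intro i _
    simp only [Matrix.mulVec, dotProduct, Finset.mul_sum]
    apply Finset.sum_congr rfl; intro j _; ring
  have step2 : ∑ i, ∑ j, μ i * Q i j * (w i * w j)
      ≤ ∑ i, ∑ j, μ i * Q i j * ((w i ^ 2 + w j ^ 2) / 2) := by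
    apply Finset.sum_le_sum; intro i _
    apply Finset.sum_le_sum; intro j _
    apply mul_le_mul_of_nonneg_left _ (mul_nonneg (hμ0 i) (hQ0 i j))
    nlinarith [sq_nonneg (w i - w j)]
  have step3 : ∑ i, ∑ j, μ i * Q i j * ((w i ^ 2 + w j ^ 2) / 2)
      = c * ∑ i, μ i * w i * w i := by
    have e1 : ∀ i : Fin d, ∑ j, μ i * Q i j * (w i ^ 2 / 2)
        = μ i * w i ^ 2 / 2 * c := by
      intro i
      rw [← hrow i, Finset.mul_sum]
      apply Finset.sum_congr rfl; intro j _; ring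
    have e2 : ∑ i, ∑ j, μ i * Q i j * (w j ^ 2 / 2)
        = ∑ j, c * μ j * (w j ^ 2 / 2) := by
      rw [Finset.sum_comm]
      apply Finset.sum_congr rfl; intro j _
      rw [← hcol j, Finset.sum_mul]
    have split : ∀ i j : Fin d, μ i * Q i j * ((w i ^ 2 + w j ^ 2) / 2)
        = μ i * Q i j * (w i ^ 2 / 2) + μ i * Q i j * (w j ^ 2 / 2) := by
      intro i j; ring
    simp_rw [split, Finset.sum_add_distrib, e1, e2]
    rw [Finset.mul_sum, ← Finset.sum_add_distrib]
    apply Finset.sum_congr rfl; intro i _; ring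
  calc ∑ i, μ i * w i * Q.mulVec w i
      ≤ c * ∑ i, μ i * w i * w i := by rw [step1, ← step3]; exact step2
    _ ≤ 1 * ∑ i, μ i * w i * w i := mul_le_mul_of_nonneg_right hc1 hS0
    _ = _ := one_mul _



section PlamFacts
variable (P : Matrix (Fin d) (Fin d) ℝ) (hP : ∀ i j, 0 ≤ P i j)
  (hrow : ∀ i, ∑ j, P i j = 1) (γ lam : ℝ) (hq0 : 0 ≤ lam * γ) (hq1 : lam * γ < 1)

include hP hrow hq0 hq1

lemma Plam_apply (i j : Fin d) :
    Plam P γ lam i j = (1 - lam) * ∑' m : ℕ, (lam * γ) ^ m * (P ^ (m + 1)) i j := by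
  have h := summable_Pseries P hP hrow (lam * γ) hq0 hq1
  unfold Plam
  rw [Matrix.smul_apply, smul_eq_mul]
  congr 1
  erw [tsum_apply h, tsum_apply (Pi.summable.mp h i)]
  simp [Matrix.smul_apply]

lemma Plam_summable_entry (i j : Fin d) :
    Summable (fun m : ℕ => (lam * γ) ^ m * (P ^ (m + 1)) i j) :=
  summable_geom_mul _ hq0 hq1 _ (fun m => pow_nonneg_entry P hP _ i j)
    (fun m => pow_entry_le_one P hP hrow _ i j)

lemma Plam_nonneg (hlam1 : lam ≤ 1) (i j : Fin d) : 0 ≤ Plam P γ lam i j := by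
  rw [Plam_apply P hP hrow γ lam hq0 hq1]
  apply mul_nonneg (by linarith)
  apply tsum_nonneg
  intro m
  exact mul_nonneg (pow_nonneg hq0 m) (pow_nonneg_entry P hP _ i j)

lemma Plam_row_sum (i : Fin d) :
    ∑ j, Plam P γ lam i j = (1 - lam) * (1 - lam * γ)⁻¹ := by
  simp_rw [Plam_apply P hP hrow γ lam hq0 hq1]
  rw [← Finset.mul_sum]
  congr 1
  rw [← Summable.tsum_finsetSum (fun j _ => Plam_summable_entry P hP hrow γ lam hq0 hq1 i j)]
  rw [← tsum_geometric_of_lt_one hq0 hq1]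
  apply tsum_congr; intro m
  rw [← Finset.mul_sum, pow_row_sum P hrow, mul_one]

lemma Plam_col_sum (μ : Fin d → ℝ) (hμ_inv : ∀ j, ∑ i, μ i * P i j = μ j) (j : Fin d) :
    ∑ i, μ i * Plam P γ lam i j = (1 - lam) * (1 - lam * γ)⁻¹ * μ j := by
  simp_rw [Plam_apply P hP hrow γ lam hq0 hq1]
  have : ∀ i : Fin d, μ i * ((1 - lam) * ∑' m : ℕ, (lam * γ) ^ m * (P ^ (m + 1)) i j)
      = (1 - lam) * ∑' m : ℕ, (lam * γ) ^ m * (μ i * (P ^ (m + 1)) i j) := by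
    intro i
    have h2 : ∑' m : ℕ, (lam * γ) ^ m * (μ i * (P ^ (m + 1)) i j)
        = μ i * ∑' m : ℕ, (lam * γ) ^ m * (P ^ (m + 1)) i j := by
      rw [← tsum_mul_left]
      apply tsum_congr; intro m; ring
    rw [h2]; ring
  simp_rw [this]
  rw [← Finset.mul_sum, mul_assoc]
  congr 1
  have hsum : ∀ i : Fin d, Summable (fun m : ℕ => (lam * γ) ^ m * (μ i * (P ^ (m + 1)) i j)) := by
    intro i
    have := (Plam_summable_entry P hP hrow γ lam hq0 hq1 i j).mul_left (μ i)
    convert this using 2 with m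
    · rfl
    ring
  rw [← Summable.tsum_finsetSum (fun i _ => hsum i), ← tsum_geometric_of_lt_one hq0 hq1, ← tsum_mul_right]
  apply tsum_congr; intro m
  rw [← Finset.mul_sum, pow_mu_inv P μ hμ_inv (m + 1) j]

end PlamFacts






section FixedPoint
variable (P : Matrix (Fin d) (Fin d) ℝ) (hP : ∀ i j, 0 ≤ P i j)
  (hrow : ∀ i, ∑ j, P i j = 1) (γ : ℝ) (hγ0 : 0 < γ) (hγ1 : γ < 1) (rbar : Fin d → ℝ)

include hP hrow hγ0 hγ1

lemma e_abs_le (t : ℕ) (i : Fin d) :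
    |γ ^ t * (P ^ t).mulVec rbar i| ≤ γ ^ t * ∑ j, |rbar j| := by
  have h1 : |(P ^ t).mulVec rbar i| ≤ ∑ j, |rbar j| := by
    simp only [Matrix.mulVec, dotProduct]
    calc |∑ j, (P ^ t) i j * rbar j| ≤ ∑ j, |(P ^ t) i j * rbar j| :=
          Finset.abs_sum_le_sum_abs _ _
      _ ≤ ∑ j, |rbar j| := by
          apply Finset.sum_le_sum; intro j _
          rw [abs_mul, abs_of_nonneg (pow_nonneg_entry P hP t i j)]
          exact mul_le_of_le_one_left (abs_nonneg _) (pow_entry_le_one P hP hrow t i j)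
  rw [abs_mul, abs_of_nonneg (pow_nonneg hγ0.le t)]
  exact mul_le_mul_of_nonneg_left h1 (pow_nonneg hγ0.le t)

lemma summable_e (i : Fin d) :
    Summable (fun t : ℕ => γ ^ t * (P ^ t).mulVec rbar i) := by
  apply Summable.of_norm_bounded
    ((summable_geometric_of_lt_one hγ0.le hγ1).mul_right (∑ j, |rbar j|))
  intro t
  rw [Real.norm_eq_abs]
  exact e_abs_le P hP hrow γ hγ0 hγ1 rbar t i

lemma summable_e_pi : Summable (fun t : ℕ => γ ^ t • (P ^ t).mulVec rbar) := by
  rw [Pi.summable]; intro i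
  simp only [Pi.smul_apply, smul_eq_mul]
  exact summable_e P hP hrow γ hγ0 hγ1 rbar i

lemma Vstar_apply (i : Fin d) :
    Vstar P γ rbar i = ∑' t : ℕ, γ ^ t * (P ^ t).mulVec rbar i := by
  unfold Vstar
  rw [tsum_apply (summable_e_pi P hP hrow γ hγ0 hγ1 rbar)]
  simp [Pi.smul_apply]

lemma partial_abs_le (m : ℕ) (i : Fin d) :
    |∑ t ∈ Finset.range (m + 1), γ ^ t * (P ^ t).mulVec rbar i|
      ≤ (1 - γ)⁻¹ * ∑ j, |rbar j| := by
  calc |∑ t ∈ Finset.range (m + 1), γ ^ t * (P ^ t).mulVec rbar i|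
      ≤ ∑ t ∈ Finset.range (m + 1), |γ ^ t * (P ^ t).mulVec rbar i| :=
        Finset.abs_sum_le_sum_abs _ _
    _ ≤ ∑ t ∈ Finset.range (m + 1), γ ^ t * ∑ j, |rbar j| :=
        Finset.sum_le_sum fun t _ => e_abs_le P hP hrow γ hγ0 hγ1 rbar t i
    _ = (∑ t ∈ Finset.range (m + 1), γ ^ t) * ∑ j, |rbar j| := by
        rw [Finset.sum_mul]
    _ ≤ (1 - γ)⁻¹ * ∑ j, |rbar j| := by
        apply mul_le_mul_of_nonneg_right _ (Finset.sum_nonneg fun j _ => abs_nonneg _)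
        rw [← tsum_geometric_of_lt_one hγ0.le hγ1]
        exact Summable.sum_le_tsum _ (fun t _ => pow_nonneg hγ0.le t)
          (summable_geometric_of_lt_one hγ0.le hγ1)

variable (lam : ℝ) (hlam0 : 0 ≤ lam) (hlam1 : lam < 1)
include hlam0 hlam1

lemma summable_A (i : Fin d) :
    Summable (fun m : ℕ => lam ^ m * ∑ t ∈ Finset.range (m + 1),
      γ ^ t * (P ^ t).mulVec rbar i) := by
  apply Summable.of_norm_bounded
    ((summable_geometric_of_lt_one hlam0 hlam1).mul_right ((1 - γ)⁻¹ * ∑ j, |rbar j|))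
  intro m
  rw [Real.norm_eq_abs, abs_mul, abs_of_nonneg (pow_nonneg hlam0 m)]
  exact mul_le_mul_of_nonneg_left
    (partial_abs_le P hP hrow γ hγ0 hγ1 rbar m i) (pow_nonneg hlam0 m)

lemma summable_rlam_pi :
    Summable (fun m : ℕ => lam ^ m •
      (∑ t ∈ Finset.range (m + 1), γ ^ t • (P ^ t).mulVec rbar)) := by
  rw [Pi.summable]; intro i
  have := summable_A P hP hrow γ hγ0 hγ1 rbar lam hlam0 hlam1 i
  convert this using 2 with m
  simp [Finset.sum_apply, Pi.smul_apply]

lemma rlam_apply (i : Fin d) :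
    rlam P γ lam rbar i = (1 - lam) * ∑' m : ℕ, lam ^ m *
      ∑ t ∈ Finset.range (m + 1), γ ^ t * (P ^ t).mulVec rbar i := by
  unfold rlam
  rw [Pi.smul_apply, smul_eq_mul]
  congr 1
  rw [tsum_apply (summable_rlam_pi P hP hrow γ hγ0 hγ1 rbar lam hlam0 hlam1)]
  apply tsum_congr; intro m
  simp [Finset.sum_apply, Pi.smul_apply]

lemma key_tail (m : ℕ) (i : Fin d) :
    γ ^ (m + 1) * (P ^ (m + 1)).mulVec (Vstar P γ rbar) i
      = Vstar P γ rbar i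
        - ∑ t ∈ Finset.range (m + 1), γ ^ t * (P ^ t).mulVec rbar i := by
  have h1 : (P ^ (m + 1)).mulVec (Vstar P γ rbar) i
      = ∑' t : ℕ, γ ^ t * (P ^ (m + 1 + t)).mulVec rbar i := by
    have e1 : (P ^ (m + 1)).mulVec (Vstar P γ rbar) i
        = ∑ j, (P ^ (m + 1)) i j * Vstar P γ rbar j := by
      simp [Matrix.mulVec, dotProduct]
    rw [e1]
    have e2 : ∀ j : Fin d, (P ^ (m + 1)) i j * Vstar P γ rbar j
        = ∑' t : ℕ, (P ^ (m + 1)) i j * (γ ^ t * (P ^ t).mulVec rbar j) := by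
      intro j
      rw [tsum_mul_left, Vstar_apply P hP hrow γ hγ0 hγ1 rbar j]
    simp_rw [e2]
    rw [← Summable.tsum_finsetSum (fun j _ => (summable_e P hP hrow γ hγ0 hγ1 rbar j).mul_left _)]
    apply tsum_congr; intro t
    have e3 : ∑ j, (P ^ (m + 1)) i j * (γ ^ t * (P ^ t).mulVec rbar j)
        = γ ^ t * ∑ j, (P ^ (m + 1)) i j * (P ^ t).mulVec rbar j := by
      rw [Finset.mul_sum]; apply Finset.sum_congr rfl; intro j _; ring
    rw [e3]
    congr 1
    have : ∑ j, (P ^ (m + 1)) i j * (P ^ t).mulVec rbar j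
        = (P ^ (m + 1)).mulVec ((P ^ t).mulVec rbar) i := by
      simp [Matrix.mulVec, dotProduct]
    rw [this, Matrix.mulVec_mulVec, ← pow_add]
  have h2 := Summable.sum_add_tsum_nat_add (f := fun t => γ ^ t * (P ^ t).mulVec rbar i)
    (m + 1) (summable_e P hP hrow γ hγ0 hγ1 rbar i)
  rw [h1, ← tsum_mul_left]
  have h3 : ∑' t : ℕ, γ ^ (m + 1) * (γ ^ t * (P ^ (m + 1 + t)).mulVec rbar i)
      = ∑' t : ℕ, γ ^ (t + (m + 1)) * (P ^ (t + (m + 1))).mulVec rbar i := by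
    apply tsum_congr; intro t
    rw [add_comm (m + 1) t, pow_add]
    ring
  rw [h3, Vstar_apply P hP hrow γ hγ0 hγ1 rbar i]
  linarith [h2]

variable (hq0 : 0 ≤ lam * γ) (hq1 : lam * γ < 1)
include hq0 hq1

lemma Plam_mulVec_Vstar (i : Fin d) :
    γ * (Plam P γ lam).mulVec (Vstar P γ rbar) i
      = (1 - lam) * ∑' m : ℕ, lam ^ m *
          (Vstar P γ rbar i
            - ∑ t ∈ Finset.range (m + 1), γ ^ t * (P ^ t).mulVec rbar i) := by
  have e1 : (Plam P γ lam).mulVec (Vstar P γ rbar) i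
      = ∑ j, Plam P γ lam i j * Vstar P γ rbar j := by
    simp [Matrix.mulVec, dotProduct]
  have e2 : ∀ j : Fin d, Plam P γ lam i j * Vstar P γ rbar j
      = (1 - lam) * ∑' m : ℕ, (lam * γ) ^ m * (P ^ (m + 1)) i j * Vstar P γ rbar j := by
    intro j
    rw [Plam_apply P hP hrow γ lam hq0 hq1, mul_assoc, tsum_mul_right]
  have e4 : (Plam P γ lam).mulVec (Vstar P γ rbar) i
      = (1 - lam) * ∑' m : ℕ, (lam * γ) ^ m * (P ^ (m + 1)).mulVec (Vstar P γ rbar) i := by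
    rw [e1]
    simp_rw [e2]
    rw [← Finset.mul_sum]
    congr 1
    rw [← Summable.tsum_finsetSum (fun j _ =>
      (Plam_summable_entry P hP hrow γ lam hq0 hq1 i j).mul_right _)]
    apply tsum_congr; intro m
    have : ∑ j, (lam * γ) ^ m * (P ^ (m + 1)) i j * Vstar P γ rbar j
        = (lam * γ) ^ m * ∑ j, (P ^ (m + 1)) i j * Vstar P γ rbar j := by
      rw [Finset.mul_sum]; apply Finset.sum_congr rfl; intro j _; ring
    rw [this]
    congr 1
  rw [e4, mul_comm γ, mul_assoc]
  congr 1
  rw [← tsum_mul_right]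
  apply tsum_congr; intro m
  rw [← key_tail P hP hrow γ hγ0 hγ1 rbar lam hlam0 hlam1 m i, mul_pow]
  ring

lemma Tlam_fixed : Tlam P γ lam rbar (Vstar P γ rbar) = Vstar P γ rbar := by
  funext i
  have hA := summable_A P hP hrow γ hγ0 hγ1 rbar lam hlam0 hlam1 i
  have hgeo := (summable_geometric_of_lt_one hlam0 hlam1).mul_right (Vstar P γ rbar i)
  have hB : Summable (fun m : ℕ => lam ^ m * (Vstar P γ rbar i
      - ∑ t ∈ Finset.range (m + 1), γ ^ t * (P ^ t).mulVec rbar i)) := by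
    have := hgeo.sub hA
    convert this using 2 with m
    · rfl
    ring
  show rlam P γ lam rbar i + (γ • (Plam P γ lam).mulVec (Vstar P γ rbar)) i
      = Vstar P γ rbar i
  rw [Pi.smul_apply, smul_eq_mul,
    Plam_mulVec_Vstar P hP hrow γ hγ0 hγ1 rbar lam hlam0 hlam1 hq0 hq1 i,
    rlam_apply P hP hrow γ hγ0 hγ1 rbar lam hlam0 hlam1 i,
    ← mul_add, ← Summable.tsum_add hA hB]
  have : ∀ m : ℕ, lam ^ m * ∑ t ∈ Finset.range (m + 1), γ ^ t * (P ^ t).mulVec rbar i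
      + lam ^ m * (Vstar P γ rbar i
        - ∑ t ∈ Finset.range (m + 1), γ ^ t * (P ^ t).mulVec rbar i)
      = lam ^ m * Vstar P γ rbar i := by
    intro m; ring
  simp_rw [this]
  rw [tsum_mul_right, tsum_geometric_of_lt_one hlam0 hlam1, ← mul_assoc,
    mul_inv_cancel₀ (by linarith : (1 : ℝ) - lam ≠ 0), one_mul]

end FixedPoint


/-- The TD vector field is strongly dissipative toward V* in the μ-weighted inner
product: ⟨V − V*, T^λ V − V⟩_μ ≤ (γ − 1) ‖V − V*‖_μ². -/
theorem TD_dissipative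
    {d : ℕ} (hd : 0 < d)
    (P : Matrix (Fin d) (Fin d) ℝ)
    (hP_nonneg : ∀ i j, 0 ≤ P i j)
    (hP_row : ∀ i, ∑ j, P i j = 1)
    (μ : Fin d → ℝ)
    (hμ_pos : ∀ i, 0 < μ i)
    (hμ_sum : ∑ i, μ i = 1)
    (hμ_inv : ∀ j, ∑ i, μ i * P i j = μ j)
    (γ lam : ℝ) (hγ0 : 0 < γ) (hγ1 : γ < 1) (hlam0 : 0 ≤ lam) (hlam1 : lam < 1)
    (rbar : Fin d → ℝ)
    (V : Fin d → ℝ) :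
    muInner μ (V - Vstar P γ rbar) (Tlam P γ lam rbar V - V)
      ≤ (γ - 1) * muNorm μ (V - Vstar P γ rbar) ^ 2 := by
  have hq0 : 0 ≤ lam * γ := mul_nonneg hlam0 hγ0.le
  have hq1 : lam * γ < 1 := by nlinarith
  set w : Fin d → ℝ := V - Vstar P γ rbar with hw
  set Q : Matrix (Fin d) (Fin d) ℝ := Plam P γ lam with hQ
  have hfix := Tlam_fixed P hP_nonneg hP_row γ hγ0 hγ1 rbar lam hlam0 hlam1 hq0 hq1
  have hdiff : Tlam P γ lam rbar V - V = γ • Q.mulVec w - w := by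
    have h1 : Tlam P γ lam rbar V - V
        = (Tlam P γ lam rbar V - Tlam P γ lam rbar (Vstar P γ rbar)) - w := by
      rw [hfix, hw]; abel
    have h2 : Tlam P γ lam rbar V - Tlam P γ lam rbar (Vstar P γ rbar)
        = γ • Q.mulVec w := by
      show rlam P γ lam rbar + γ • Q.mulVec V
          - (rlam P γ lam rbar + γ • Q.mulVec (Vstar P γ rbar)) = γ • Q.mulVec w
      rw [hw, Matrix.mulVec_sub, smul_sub]
      abel
    rw [h1, h2]
  rw [hdiff]
  have expand : muInner μ w (γ • Q.mulVec w - w)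
      = γ * (∑ i, μ i * w i * Q.mulVec w i) - ∑ i, μ i * w i * w i := by
    unfold muInner
    rw [Finset.mul_sum, ← Finset.sum_sub_distrib]
    apply Finset.sum_congr rfl; intro i _
    simp only [Pi.sub_apply, Pi.smul_apply, smul_eq_mul]
    ring
  have hnorm : muNorm μ w ^ 2 = ∑ i, μ i * w i * w i := by
    have hS0 : 0 ≤ muInner μ w w :=
      Finset.sum_nonneg fun i _ => by nlinarith [(hμ_pos i).le, sq_nonneg (w i)]
    rw [muNorm, Real.sq_sqrt hS0]
    rfl
  set c : ℝ := (1 - lam) * (1 - lam * γ)⁻¹ with hc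
  have hc1 : c ≤ 1 := by
    rw [hc, ← div_eq_mul_inv, div_le_one (by linarith : (0:ℝ) < 1 - lam * γ)]
    nlinarith
  have hX := key_ineq Q μ w
    (Plam_nonneg P hP_nonneg hP_row γ lam hq0 hq1 hlam1.le)
    c hc1
    (Plam_row_sum P hP_nonneg hP_row γ lam hq0 hq1)
    (Plam_col_sum P hP_nonneg hP_row γ lam hq0 hq1 μ hμ_inv)
    (fun i => (hμ_pos i).le)
  have hS0' : 0 ≤ ∑ i, μ i * w i * w i :=
    Finset.sum_nonneg fun i _ => by nlinarith [(hμ_pos i).le, sq_nonneg (w i)]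
  rw [expand, hnorm]
  nlinarith [hX, hS0', mul_le_mul_of_nonneg_left hX hγ0.le]
end
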